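/- arXiv:1609.03772 — 5 statements merged into one kernel-verified Lean document; each statement's English description precedes it below -/
import Mathlib

section
/- Let C be positive definite with A ⊆ B sets of indices not containing r. Then the conditional variance of coordinate r given coordinates in B is at most the conditional variance given coordinates in A: C_{rr} − C_{r,B}(C_{B,B})⁻¹C_{B,r} ≤ C_{rr} − C_{r,A}(C_{A,A})⁻¹C_{A,r}. -/
open Matrix

/-!
For positive definite `M`, `v ⬝ᵥ M⁻¹ *ᵥ v` is the maximum of `2 (w ⬝ᵥ v) - w ⬝ᵥ M *ᵥ w` over
all `w`, attained at `w = M⁻¹ *ᵥ v`. Extending a vector on `A` by zero to `B ⊇ A` preserves the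
value of this objective, so the maximum over `A` is at most the maximum over `B`; the two
conditional variances are `C r r` minus these maxima.
-/

namespace Matrix

variable {ι κ : Type*} [Fintype ι] [Fintype κ]

theorem extend_zero_dotProduct {f : ι → κ} (hf : f.Injective) (w : ι → ℝ) (u : κ → ℝ) :
    Function.extend f w 0 ⬝ᵥ u = w ⬝ᵥ (u ∘ f) :=
  (Fintype.sum_of_injective f hf _ _
    (fun k hk => by rw [Function.extend_apply' _ _ _ hk, Pi.zero_apply, zero_mul])
    (fun i => by rw [hf.extend_apply]; rfl)).symm

theorem dotProduct_submatrix_mulVec {f : ι → κ} (hf : f.Injective) (M : Matrix κ κ ℝ)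
    (w : ι → ℝ) :
    w ⬝ᵥ M.submatrix f f *ᵥ w = Function.extend f w 0 ⬝ᵥ M *ᵥ Function.extend f w 0 := by
  have hM : M.submatrix f f *ᵥ w = (M *ᵥ Function.extend f w 0) ∘ f := by
    ext i
    simp only [mulVec, Function.comp_apply, dotProduct_comm (M (f i)),
      extend_zero_dotProduct hf]
    exact dotProduct_comm _ _
  rw [hM, extend_zero_dotProduct hf]

theorem IsHermitian.dotProduct_mulVec_comm {M : Matrix κ κ ℝ} (hM : M.IsHermitian)
    (u w : κ → ℝ) : u ⬝ᵥ M *ᵥ w = w ⬝ᵥ M *ᵥ u := by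
  rw [dotProduct_mulVec, ← mulVec_transpose, ← conjTranspose_eq_transpose_of_trivial, hM.eq,
    dotProduct_comm]

variable [DecidableEq κ]

theorem PosDef.mulVec_inv_mulVec {M : Matrix κ κ ℝ} (hM : M.PosDef) (v : κ → ℝ) :
    M *ᵥ M⁻¹ *ᵥ v = v := by
  rw [mulVec_mulVec, mul_nonsing_inv M ((isUnit_iff_isUnit_det M).mp hM.isUnit), one_mulVec]

/-- Completing the square around `w = M⁻¹ v`. -/
theorem PosDef.two_mul_dotProduct_sub_le {M : Matrix κ κ ℝ} (hM : M.PosDef) (v w : κ → ℝ) :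
    2 * (w ⬝ᵥ v) - w ⬝ᵥ M *ᵥ w ≤ v ⬝ᵥ M⁻¹ *ᵥ v := by
  set u := M⁻¹ *ᵥ v
  have hMu : M *ᵥ u = v := hM.mulVec_inv_mulVec v
  have hsq : 0 ≤ (w - u) ⬝ᵥ M *ᵥ (w - u) := hM.posSemidef.dotProduct_mulVec_nonneg _
  have hcross : u ⬝ᵥ M *ᵥ w = w ⬝ᵥ v := by rw [hM.isHermitian.dotProduct_mulVec_comm, hMu]
  rw [mulVec_sub, sub_dotProduct, dotProduct_sub, dotProduct_sub, hcross, hMu,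
    dotProduct_comm u v] at hsq
  linarith

theorem PosDef.two_mul_dotProduct_sub_eq {M : Matrix κ κ ℝ} (hM : M.PosDef) (v : κ → ℝ) :
    2 * (M⁻¹ *ᵥ v ⬝ᵥ v) - M⁻¹ *ᵥ v ⬝ᵥ M *ᵥ M⁻¹ *ᵥ v = v ⬝ᵥ M⁻¹ *ᵥ v := by
  rw [hM.mulVec_inv_mulVec, dotProduct_comm]
  ring

variable [DecidableEq ι]

theorem PosDef.dotProduct_submatrix_inv_mulVec_le {M : Matrix κ κ ℝ} (hM : M.PosDef)
    {f : ι → κ} (hf : f.Injective) (v : κ → ℝ) :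
    (v ∘ f) ⬝ᵥ (M.submatrix f f)⁻¹ *ᵥ (v ∘ f) ≤ v ⬝ᵥ M⁻¹ *ᵥ v := by
  set w := (M.submatrix f f)⁻¹ *ᵥ (v ∘ f)
  calc (v ∘ f) ⬝ᵥ (M.submatrix f f)⁻¹ *ᵥ (v ∘ f)
      = 2 * (w ⬝ᵥ (v ∘ f)) - w ⬝ᵥ M.submatrix f f *ᵥ w :=
        ((hM.submatrix hf).two_mul_dotProduct_sub_eq _).symm
    _ = 2 * (Function.extend f w 0 ⬝ᵥ v)
          - Function.extend f w 0 ⬝ᵥ M *ᵥ Function.extend f w 0 := by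
        rw [extend_zero_dotProduct hf, dotProduct_submatrix_mulVec hf]
    _ ≤ v ⬝ᵥ M⁻¹ *ᵥ v := hM.two_mul_dotProduct_sub_le v _

end Matrix

theorem schur_complement_antitone_general {m : ℕ}
    (C : Matrix (Fin m) (Fin m) ℝ) (hC : C.PosDef)
    (r : Fin m) (A B : Finset (Fin m)) (hAB : A ⊆ B) :
    C r r - ∑ i : B, ∑ j : B,
        C r i * ((Matrix.of fun i j : B => C i j)⁻¹ i j) * C j r
      ≤ C r r - ∑ i : A, ∑ j : A,
          C r i * ((Matrix.of fun i j : A => C i j)⁻¹ i j) * C j r := by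
  have hquad (S : Finset (Fin m)) : ∑ i : S, ∑ j : S,
      C r i * ((Matrix.of fun i j : S => C i j)⁻¹ i j) * C j r
        = (fun i : S => C r i) ⬝ᵥ (Matrix.of fun i j : S => C i j)⁻¹ *ᵥ fun i : S => C r i := by
    simp only [dotProduct, mulVec, Finset.mul_sum]
    refine Finset.sum_congr rfl fun i _ => Finset.sum_congr rfl fun j _ => ?_
    rw [← hC.isHermitian.apply (↑j) r, star_trivial, mul_assoc]
  have hB : (Matrix.of fun i j : B => C i j).PosDef := hC.submatrix Subtype.val_injective
  rw [hquad, hquad]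
  exact sub_le_sub_left
    (hB.dotProduct_submatrix_inv_mulVec_le (f := fun i : A => ⟨i, hAB i.2⟩)
      (fun i j h => Subtype.ext (Subtype.mk.inj h)) _) _

/-- Monotonicity of the conditional variance (Schur complement): conditioning on a
larger index set `B ⊇ A` cannot increase the conditional variance of coordinate `r`. -/
theorem schur_complement_antitone {m : ℕ}
    (C : Matrix (Fin m) (Fin m) ℝ) (hC : C.PosDef)
    (r : Fin m) (A B : Finset (Fin m)) (hAB : A ⊆ B) (hrB : r ∉ B) :
    C r r - ∑ i : B, ∑ j : B,
        C r i * ((Matrix.of fun i j : B => C i j)⁻¹ i j) * C j r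
      ≤ C r r - ∑ i : A, ∑ j : A,
          C r i * ((Matrix.of fun i j : A => C i j)⁻¹ i j) * C j r :=
  schur_complement_antitone_general C hC r A B hAB
end

section
/- Let x[1],...,x[N] be independent zero-mean Gaussian vectors in ℝ^d with positive definite covariances C[n] and precision matrices K[n] = (C[n])⁻¹, with eigenvalue lower bounds λ_min(C[n]) ≥ α[n] > 0. Define the neighborhood N(r) = { t ≠ r : (K[n])_{r,t} ≠ 0 for some n } and the conditional variance V(r|T) = (1/N) Σ_n 1/(((C[n])_{T∪{r},T∪{r}})⁻¹)_{r,r}. If T ⊆ {1,...,d}\{r} satisfies N(r)\T ≠ ∅, pick j ∈ N(r)\T; then V(r|T) ≥ (1/N) Σ_{n=1}^N α[n] ((K[n])_{r,j}/(K[n])_{r,r})² + (1/N) Σ_{n=1}^N 1/(K[n])_{r,r}. -/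
/-!
Write `K = C⁻¹` and `β = K_{r,·} / K_{r,r}`, so `β r = 1` and `C β = e_r / K_{r,r}`. For every `v`
with `v r = 1` the vector `v - β` vanishes at `r`, hence is `C`-orthogonal to `β`, and
`vᵀ C v = 1 / K_{r,r} + (v - β)ᵀ C (v - β)`. The same identity for the principal submatrix
`C_SS`, `S = T ∪ {r}`, shows that `1 / ((C_SS)⁻¹)_{r,r}` is the value of `vᵀ C v` at a vector `v`
supported in `S`. Since `j ∉ S`, `(v - β) j = -K_{r,j} / K_{r,r}`, and `C ≥ α` bounds the excess
`(v - β)ᵀ C (v - β)` below by `α (K_{r,j} / K_{r,r})²`. Averaging over `n` gives the claim.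
-/

namespace Matrix

section NormalizedInvRow

variable {ι : Type*} [Fintype ι] [DecidableEq ι] {C : Matrix ι ι ℝ}

noncomputable def normalizedInvRow (C : Matrix ι ι ℝ) (r : ι) : ι → ℝ :=
  (C⁻¹ r r)⁻¹ • C⁻¹.row r

lemma normalizedInvRow_apply (r i : ι) : normalizedInvRow C r i = C⁻¹ r i / C⁻¹ r r := by
  simp [normalizedInvRow, div_eq_inv_mul]

lemma normalizedInvRow_self {r : ι} (hr : C⁻¹ r r ≠ 0) : normalizedInvRow C r r = 1 := by
  rw [normalizedInvRow_apply, div_self hr]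

lemma mulVec_normalizedInvRow (hC : C.IsSymm) (hdet : IsUnit C.det) (r : ι) :
    C *ᵥ normalizedInvRow C r = (C⁻¹ r r)⁻¹ • Pi.single r 1 := by
  rw [← hC.eq, ← vecMul_transpose, transpose_transpose, hC.eq, normalizedInvRow,
    ← single_one_vecMul, smul_vecMul, vecMul_vecMul, nonsing_inv_mul _ hdet, vecMul_one]

lemma dotProduct_mulVec_normalizedInvRow (hC : C.IsSymm) (hdet : IsUnit C.det) (r : ι)
    (x : ι → ℝ) : x ⬝ᵥ (C *ᵥ normalizedInvRow C r) = x r / C⁻¹ r r := by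
  rw [mulVec_normalizedInvRow hC hdet, dotProduct_smul, dotProduct_single_one, smul_eq_mul,
    div_eq_inv_mul]

lemma normalizedInvRow_dotProduct_mulVec_self (hC : C.IsSymm) (hdet : IsUnit C.det) {r : ι}
    (hr : C⁻¹ r r ≠ 0) :
    normalizedInvRow C r ⬝ᵥ (C *ᵥ normalizedInvRow C r) = 1 / C⁻¹ r r := by
  rw [dotProduct_mulVec_normalizedInvRow hC hdet, normalizedInvRow_self hr]

lemma dotProduct_mulVec_eq_add_of_apply_eq_one (hC : C.IsSymm) (hdet : IsUnit C.det)
    {r : ι} (hr : C⁻¹ r r ≠ 0) {v : ι → ℝ} (hv : v r = 1) :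
    v ⬝ᵥ (C *ᵥ v) = 1 / C⁻¹ r r +
      (v - normalizedInvRow C r) ⬝ᵥ (C *ᵥ (v - normalizedInvRow C r)) := by
  set β := normalizedInvRow C r
  set w := v - β
  have hw : w ⬝ᵥ (C *ᵥ β) = 0 := by
    have hwr : w r = 0 := by simp [w, β, hv, normalizedInvRow_self hr]
    rw [dotProduct_mulVec_normalizedInvRow hC hdet, hwr, zero_div]
  have hw' : β ⬝ᵥ (C *ᵥ w) = 0 := by
    rw [dotProduct_mulVec, ← mulVec_transpose, hC.eq, dotProduct_comm, hw]
  rw [show v = β + w by simp [w], mulVec_add, dotProduct_add, add_dotProduct, add_dotProduct,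
    normalizedInvRow_dotProduct_mulVec_self hC hdet hr, hw, hw']
  ring

end NormalizedInvRow

lemma mul_sq_apply_le_dotProduct_mulVec {ι : Type*} [Fintype ι] [DecidableEq ι]
    {C : Matrix ι ι ℝ} {a : ℝ} (ha : 0 ≤ a) (hC : (C - a • (1 : Matrix ι ι ℝ)).PosSemidef)
    (w : ι → ℝ) (j : ι) : a * w j ^ 2 ≤ w ⬝ᵥ (C *ᵥ w) := by
  have hquad := hC.dotProduct_mulVec_nonneg w
  rw [star_trivial, sub_mulVec, dotProduct_sub, smul_mulVec, one_mulVec, dotProduct_smul,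
    sub_nonneg, smul_eq_mul] at hquad
  have hsq : w j ^ 2 ≤ w ⬝ᵥ w := by
    simpa only [sq, dotProduct] using Finset.single_le_sum (f := fun i => w i * w i)
      (fun i _ => mul_self_nonneg (w i)) (Finset.mem_univ j)
  nlinarith

lemma dotProduct_mulVec_eq_submatrix {ι R : Type*} [Fintype ι] [NonUnitalNonAssocSemiring R]
    (C : Matrix ι ι R) (S : Finset ι) {v : ι → R} (hv : ∀ i ∉ S, v i = 0) :
    v ⬝ᵥ (C *ᵥ v) =
      (fun k : S => v k) ⬝ᵥ (C.submatrix (↑) (↑) *ᵥ fun k : S => v k) := by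
  have hsum : ∀ f : ι → R, (∀ i ∉ S, f i = 0) → ∑ i, f i = ∑ k : S, f k := fun f hf => by
    rw [Finset.sum_coe_sort S f]
    exact (Finset.sum_subset (Finset.subset_univ S) fun i _ hi => hf i hi).symm
  simp only [dotProduct, mulVec, submatrix_apply]
  rw [hsum _ fun i hi => by rw [hv i hi, zero_mul]]
  refine Finset.sum_congr rfl fun k _ => congrArg _ ?_
  exact hsum _ fun i hi => by rw [hv i hi, mul_zero]

section PosDef

variable {ι : Type*} [Fintype ι] [DecidableEq ι] {C : Matrix ι ι ℝ}

lemma PosDef.le_dotProduct_mulVec_of_apply_eq_one_of_apply_eq_zero (hC : C.PosDef) {a : ℝ}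
    (ha : 0 ≤ a) (heig : (C - a • (1 : Matrix ι ι ℝ)).PosSemidef) {r j : ι} {v : ι → ℝ}
    (hvr : v r = 1) (hvj : v j = 0) :
    a * (C⁻¹ r j / C⁻¹ r r) ^ 2 + 1 / C⁻¹ r r ≤ v ⬝ᵥ (C *ᵥ v) := by
  have hsymm : C.IsSymm := isHermitian_iff_isSymm.1 hC.isHermitian
  have hdet : IsUnit C.det := hC.det_pos.ne'.isUnit
  have hrr : C⁻¹ r r ≠ 0 := hC.inv.diag_pos.ne'
  have hgap := mul_sq_apply_le_dotProduct_mulVec ha heig (v - normalizedInvRow C r) j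
  rw [Pi.sub_apply, hvj, zero_sub, neg_sq, normalizedInvRow_apply] at hgap
  rw [dotProduct_mulVec_eq_add_of_apply_eq_one hsymm hdet hrr hvr]
  linarith

lemma PosDef.exists_dotProduct_mulVec_eq_one_div_inv_submatrix (hC : C.PosDef) {S : Finset ι}
    {r : ι} (hr : r ∈ S) :
    ∃ v : ι → ℝ, v r = 1 ∧ (∀ i ∉ S, v i = 0) ∧
      v ⬝ᵥ (C *ᵥ v) = 1 / (C.submatrix (Subtype.val : S → ι) Subtype.val)⁻¹ ⟨r, hr⟩ ⟨r, hr⟩ := by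
  set A := C.submatrix (Subtype.val : S → ι) Subtype.val
  have hA : A.PosDef := hC.submatrix Subtype.val_injective
  set u := normalizedInvRow A ⟨r, hr⟩
  have hur : u ⟨r, hr⟩ = 1 := normalizedInvRow_self hA.inv.diag_pos.ne'
  refine ⟨fun i => if h : i ∈ S then u ⟨i, h⟩ else 0, by simpa [hr] using hur,
    fun i hi => dif_neg hi, ?_⟩
  rw [dotProduct_mulVec_eq_submatrix C S fun i hi => dif_neg hi]
  simp only [Finset.coe_mem, dite_true, Subtype.coe_eta]
  exact normalizedInvRow_dotProduct_mulVec_self (isHermitian_iff_isSymm.1 hA.isHermitian)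
    hA.det_pos.ne'.isUnit hA.inv.diag_pos.ne'

lemma PosDef.le_one_div_inv_submatrix_apply (hC : C.PosDef) {a : ℝ} (ha : 0 ≤ a)
    (heig : (C - a • (1 : Matrix ι ι ℝ)).PosSemidef) {r j : ι} {S : Finset ι} (hr : r ∈ S)
    (hj : j ∉ S) :
    a * (C⁻¹ r j / C⁻¹ r r) ^ 2 + 1 / C⁻¹ r r ≤
      1 / (C.submatrix (Subtype.val : S → ι) Subtype.val)⁻¹ ⟨r, hr⟩ ⟨r, hr⟩ := by
  obtain ⟨v, hvr, hvS, hv⟩ := hC.exists_dotProduct_mulVec_eq_one_div_inv_submatrix hr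
  exact hv ▸ hC.le_dotProduct_mulVec_of_apply_eq_one_of_apply_eq_zero ha heig hvr (hvS j hj)

end PosDef

end Matrix

theorem cond_variance_lower_bound_missing_neighbor_general {N d : ℕ}
    (C K : Fin N → Matrix (Fin d) (Fin d) ℝ)
    (hC : ∀ n, (C n).PosDef) (hK : ∀ n, K n = (C n)⁻¹)
    (α : Fin N → ℝ) (hα : ∀ n, 0 < α n)
    (heig : ∀ n, (C n - α n • (1 : Matrix (Fin d) (Fin d) ℝ)).PosSemidef)
    (r j : Fin d) (T : Finset (Fin d))
    (hjr : j ≠ r) (hjT : j ∉ T) :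
    ((1 : ℝ) / N) * ∑ n,
        1 / ((Matrix.of fun i j' : (insert r T : Finset (Fin d)) => C n i j')⁻¹
          ⟨r, Finset.mem_insert_self r T⟩ ⟨r, Finset.mem_insert_self r T⟩)
      ≥ ((1 : ℝ) / N) * (∑ n, α n * ((K n) r j / (K n) r r) ^ 2)
        + ((1 : ℝ) / N) * ∑ n, 1 / (K n) r r := by
  have hj : j ∉ insert r T := by simp [hjr, hjT]
  rw [ge_iff_le, ← mul_add, ← Finset.sum_add_distrib]
  gcongr with n
  rw [hK n]
  -- `Matrix.of fun i j' => C n i j'` is `(C n).submatrix Subtype.val Subtype.val` by definition.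
  exact (hC n).le_one_div_inv_submatrix_apply (hα n).le (heig n) (Finset.mem_insert_self r T) hj

/-- Theorem 1, first case: if the conditioning set `T` misses a true neighbor
`j ∈ N(r) \ T`, then the conditional variance
`V(r|T) = (1/N) ∑ n, 1/(((C n)_{T∪{r},T∪{r}})⁻¹)_{r,r}` is inflated by at least the
partial-correlation term `(1/N) ∑ n, α n ((K n)_{r,j}/(K n)_{r,r})²` above the minimal
value `(1/N) ∑ n, 1/(K n)_{r,r}`. -/
theorem cond_variance_lower_bound_missing_neighbor {N d : ℕ} (hN : 0 < N)
    (C K : Fin N → Matrix (Fin d) (Fin d) ℝ)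
    (hC : ∀ n, (C n).PosDef) (hK : ∀ n, K n = (C n)⁻¹)
    (α : Fin N → ℝ) (hα : ∀ n, 0 < α n)
    (heig : ∀ n, (C n - α n • (1 : Matrix (Fin d) (Fin d) ℝ)).PosSemidef)
    (r j : Fin d) (T : Finset (Fin d)) (hrT : r ∉ T)
    (hjr : j ≠ r) (hjK : ∃ n, (K n) r j ≠ 0) (hjT : j ∉ T) :
    ((1 : ℝ) / N) * ∑ n,
        1 / ((Matrix.of fun i j' : (insert r T : Finset (Fin d)) => C n i j')⁻¹
          ⟨r, Finset.mem_insert_self r T⟩ ⟨r, Finset.mem_insert_self r T⟩)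
      ≥ ((1 : ℝ) / N) * (∑ n, α n * ((K n) r j / (K n) r r) ^ 2)
        + ((1 : ℝ) / N) * ∑ n, 1 / (K n) r r :=
  cond_variance_lower_bound_missing_neighbor_general C K hC hK α hα heig r j T hjr hjT
end

section
/- Let x[1],...,x[N] be independent zero-mean Gaussian vectors in ℝ^d with positive definite covariances C[n] and precisions K[n]. With N(r) = { t ≠ r : (K[n])_{r,t} ≠ 0 for some n } and V(r|T) = (1/N) Σ_n 1/(((C[n])_{T∪{r},T∪{r}})⁻¹)_{r,r}, one has V(r|T) = (1/N) Σ_{n=1}^N 1/(K[n])_{r,r} whenever N(r) ⊆ T. -/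
/-!
Conditioning on a set `S ∋ r` only sees the principal submatrix `C_SS`. If the `r`-th row of
`K = C⁻¹` vanishes outside `S`, then `K_{r,S} C_SS = (K C)_{r,S} = e_r`, so `K_{r,S}` is the
`r`-th row of `(C_SS)⁻¹`. Hence `((C_SS)⁻¹)_{rr} = K_{rr}` for every `n`, and the two averages
agree termwise.
-/

open Matrix

namespace Matrix

theorem vecMul_submatrix_of_injective {m ι R : Type*} [Fintype m] [Fintype ι]
    [NonUnitalNonAssocSemiring R] (A : Matrix ι ι R) {e : m → ι} (he : Function.Injective e)
    {v : ι → R} (hv : ∀ j ∉ Set.range e, v j = 0) :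
    (v ∘ e) ᵥ* A.submatrix e e = (v ᵥ* A) ∘ e := by
  ext i
  exact Fintype.sum_of_injective e he _ (fun j => v j * A j (e i))
    (fun j hj => by simp [hv j hj]) fun _ => rfl

theorem inv_submatrix_apply_of_row_support {m ι K : Type*} [Fintype m] [DecidableEq m]
    [Fintype ι] [DecidableEq ι] [Field K] (A : Matrix ι ι K) (hA : IsUnit A.det)
    {e : m → ι} (he : Function.Injective e) (hAe : IsUnit (A.submatrix e e).det) (r : m)
    (hrow : ∀ j ∉ Set.range e, A⁻¹ (e r) j = 0) (i : m) :
    (A.submatrix e e)⁻¹ r i = A⁻¹ (e r) (e i) := by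
  have hrowA : A⁻¹.row (e r) ᵥ* A = Pi.single (e r) 1 := by
    rw [← single_one_vecMul, vecMul_vecMul, nonsing_inv_mul A hA, vecMul_one]
  have hrowB : (A⁻¹.row (e r) ∘ e) ᵥ* A.submatrix e e = Pi.single r 1 := by
    rw [vecMul_submatrix_of_injective A he (v := A⁻¹.row (e r)) hrow, hrowA]
    ext j
    simp [Pi.single_apply, he.eq_iff]
  have : A⁻¹.row (e r) ∘ e = Pi.single r 1 ᵥ* (A.submatrix e e)⁻¹ := by
    rw [← hrowB, vecMul_vecMul, mul_nonsing_inv _ hAe, vecMul_one]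
  simpa using (congrFun this i).symm

end Matrix

theorem cond_variance_superset_neighborhood_process_general {N d : ℕ}
    (C K : Fin N → Matrix (Fin d) (Fin d) ℝ)
    (hC : ∀ n, (C n).PosDef) (hK : ∀ n, K n = (C n)⁻¹)
    (r : Fin d) (T : Finset (Fin d))
    (hNT : ∀ t, t ≠ r → (∃ n, (K n) r t ≠ 0) → t ∈ T) :
    ((1 : ℝ) / N) * ∑ n,
        1 / ((Matrix.of fun i j : (insert r T : Finset (Fin d)) => C n i j)⁻¹
          ⟨r, Finset.mem_insert_self r T⟩ ⟨r, Finset.mem_insert_self r T⟩)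
      = ((1 : ℝ) / N) * ∑ n, 1 / (K n) r r := by
  refine congrArg _ (Finset.sum_congr rfl fun n _ => ?_)
  have hrow : ∀ j ∉ insert r T, (C n)⁻¹ r j = 0 := fun j hj => by
    rw [Finset.mem_insert, not_or] at hj
    by_contra hKj
    exact hj.2 (hNT j hj.1 ⟨n, by rwa [hK]⟩)
  have hdet := (isUnit_iff_isUnit_det _).1 (hC n).isUnit
  have hval : Function.Injective ((↑) : ↥(insert r T) → Fin d) := Subtype.val_injective
  have hdetS := (isUnit_iff_isUnit_det _).1 ((hC n).submatrix hval).isUnit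
  rw [hK n]
  exact congrArg _ (inv_submatrix_apply_of_row_support (C n) hdet hval hdetS
    ⟨r, Finset.mem_insert_self r T⟩ (fun j hj => hrow j fun hmem => hj ⟨⟨j, hmem⟩, rfl⟩) _)

/-- Theorem 1, second case: if the conditioning set `T` contains the neighborhood
`N(r) = {t ≠ r : (K n)_{r,t} ≠ 0 for some n}`, then
`V(r|T) = (1/N) ∑ n, 1/(((C n)_{T∪{r},T∪{r}})⁻¹)_{r,r} = (1/N) ∑ n, 1/(K n)_{r,r}`. -/
theorem cond_variance_superset_neighborhood_process {N d : ℕ} (hN : 0 < N)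
    (C K : Fin N → Matrix (Fin d) (Fin d) ℝ)
    (hC : ∀ n, (C n).PosDef) (hK : ∀ n, K n = (C n)⁻¹)
    (r : Fin d) (T : Finset (Fin d)) (hrT : r ∉ T)
    (hNT : ∀ t, t ≠ r → (∃ n, (K n) r t ≠ 0) → t ∈ T) :
    ((1 : ℝ) / N) * ∑ n,
        1 / ((Matrix.of fun i j : (insert r T : Finset (Fin d)) => C n i j)⁻¹
          ⟨r, Finset.mem_insert_self r T⟩ ⟨r, Finset.mem_insert_self r T⟩)
      = ((1 : ℝ) / N) * ∑ n, 1 / (K n) r r :=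
  cond_variance_superset_neighborhood_process_general C K hC hK r T hNT
end

section
/- Under the assumptions of the previous two statements, and additionally assuming the minimum partial correlation condition ρ_{a,b} ≥ ρ_min > 0 for all edges (a,b) (where ρ_{a,b} = (1/N) Σ_n α[n]((K[n])_{a,b}/(K[n])_{a,a})²) and |N(r)| ≤ s, the neighborhood N(r) is the unique minimizer over sets T ⊆ {1,...,d}\{r} with |T| ≤ s of the penalized conditional variance V(r|T) + ρ_min·|T|. -/
/-!
For a covariance `C` with precision `K`, the vector `w = K e_r / K_rr` minimises `x ↦ xᵀ C x`
over `x r = 1`, with value `1 / K_rr`, and `xᵀ C x = 1 / K_rr + (x - w)ᵀ C (x - w)`. The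
conditional variance given `T` is the same minimum over `x` supported on `T ∪ {r}`; it equals
`1 / K_rr` when `T ⊇ N(r)`, and since `C ⪰ α` it exceeds `1 / K_rr` by at least
`α Σ_{b ∈ N(r) \ T} w_b²`, strictly as soon as one of these `w_b` is nonzero. After averaging
over `n`, every neighbour missed by `T` costs at least `ρ_min` in `V`, whereas every element of
`T` costs exactly `ρ_min` in the penalty.
-/

open Matrix Finset

lemma sum_mul_eq_sum_subtype {ι : Type*} [Fintype ι] {S : Finset ι} {y : ι → ℝ}
    (hy : ∀ i ∉ S, y i = 0) (f : ι → ℝ) : ∑ i, y i * f i = ∑ i : S, y i * f i := by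
  rw [sum_coe_sort S (fun i => y i * f i)]
  exact (sum_subset (subset_univ S) fun i _ hi => by simp [hy i hi]).symm

lemma sum_sq_le_dotProduct_self {ι : Type*} [Fintype ι] (D : Finset ι) (u : ι → ℝ) :
    ∑ b ∈ D, u b ^ 2 ≤ u ⬝ᵥ u := by
  simp only [dotProduct, ← sq]
  exact sum_le_sum_of_subset_of_nonneg (subset_univ D) fun i _ _ => sq_nonneg (u i)

namespace Matrix

variable {ι : Type*} [Fintype ι]

lemma dotProduct_mulVec_comm_of_isHermitian {A : Matrix ι ι ℝ} (hA : A.IsHermitian)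
    (v w : ι → ℝ) : v ⬝ᵥ A *ᵥ w = w ⬝ᵥ A *ᵥ v := by
  rw [dotProduct_mulVec, ← vecMul_transpose, ← conjTranspose_eq_transpose_of_trivial,
    hA.eq, dotProduct_comm]

section Restriction

variable {S : Finset ι} {y : ι → ℝ}

lemma submatrix_mulVec_restrict_apply (hy : ∀ i ∉ S, y i = 0) (A : Matrix ι ι ℝ) (i : S) :
    (A.submatrix Subtype.val Subtype.val *ᵥ (fun i : S => y i)) i = (A *ᵥ y) i := by
  simp only [mulVec, dotProduct, submatrix_apply]
  simp_rw [mul_comm (A _ _)]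
  exact (sum_mul_eq_sum_subtype hy _).symm

lemma restrict_dotProduct_submatrix_mulVec (hy : ∀ i ∉ S, y i = 0) (A : Matrix ι ι ℝ) :
    (fun i : S => y i) ⬝ᵥ A.submatrix Subtype.val Subtype.val *ᵥ (fun i : S => y i) =
      y ⬝ᵥ A *ᵥ y := by
  simp only [dotProduct, submatrix_mulVec_restrict_apply hy]
  exact (sum_mul_eq_sum_subtype hy _).symm

end Restriction

variable [DecidableEq ι]

lemma dotProduct_sub_smul_one_mulVec (A : Matrix ι ι ℝ) (α : ℝ) (u : ι → ℝ) :
    u ⬝ᵥ (A - α • 1) *ᵥ u = u ⬝ᵥ A *ᵥ u - α * (u ⬝ᵥ u) := by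
  rw [sub_mulVec, dotProduct_sub, smul_mulVec, one_mulVec, dotProduct_smul, smul_eq_mul]

/-- For `x` with covariance `A`, `x ⬝ᵥ regressionVec A r` is the residual of the best linear
prediction of `x r` from the other coordinates. -/
noncomputable def regressionVec (A : Matrix ι ι ℝ) (r : ι) : ι → ℝ :=
  fun i => A⁻¹ r i / A⁻¹ r r

variable {A : Matrix ι ι ℝ} {r : ι}

lemma regressionVec_self (hA : A.PosDef) : A.regressionVec r r = 1 :=
  div_self hA.inv.diag_pos.ne'

lemma mulVec_regressionVec (hA : A.PosDef) :
    A *ᵥ A.regressionVec r = (A⁻¹ r r)⁻¹ • Pi.single r 1 := by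
  have hcol : (fun i => A⁻¹ r i) = A⁻¹ *ᵥ Pi.single r 1 := by
    ext i
    simp [mulVec_single, ← hA.isHermitian.inv.apply i r]
  have hw : A.regressionVec r = (A⁻¹ r r)⁻¹ • A⁻¹ *ᵥ Pi.single r 1 := by
    rw [← hcol]
    ext i
    simp [regressionVec, div_eq_inv_mul]
  rw [hw, mulVec_smul, mulVec_mulVec, mul_nonsing_inv _ hA.det_pos.ne'.isUnit, one_mulVec]

lemma dotProduct_mulVec_regressionVec_of_apply_eq_zero (hA : A.PosDef) {u : ι → ℝ}
    (hu : u r = 0) : u ⬝ᵥ A *ᵥ A.regressionVec r = 0 := by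
  simp [mulVec_regressionVec hA, dotProduct_smul, hu]

lemma dotProduct_mulVec_regressionVec (hA : A.PosDef) :
    A.regressionVec r ⬝ᵥ A *ᵥ A.regressionVec r = (A⁻¹ r r)⁻¹ := by
  simp [mulVec_regressionVec hA, dotProduct_smul, regressionVec_self hA]

/-- Pythagoras for the `A`-inner product: `x - regressionVec` is `A`-orthogonal to
`regressionVec` whenever `x r = 1`. -/
lemma dotProduct_mulVec_eq_inv_add (hA : A.PosDef) {x : ι → ℝ} (hx : x r = 1) :
    x ⬝ᵥ A *ᵥ x = (A⁻¹ r r)⁻¹ + (x - A.regressionVec r) ⬝ᵥ A *ᵥ (x - A.regressionVec r) := by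
  set w := A.regressionVec r
  have hu : (x - w) r = 0 := by simp [w, hx, regressionVec_self hA]
  have hcross : (x - w) ⬝ᵥ A *ᵥ w = 0 :=
    dotProduct_mulVec_regressionVec_of_apply_eq_zero hA hu
  have hcross' : w ⬝ᵥ A *ᵥ (x - w) = 0 := by
    rw [dotProduct_mulVec_comm_of_isHermitian hA.isHermitian, hcross]
  calc x ⬝ᵥ A *ᵥ x = ((x - w) + w) ⬝ᵥ A *ᵥ ((x - w) + w) := by rw [sub_add_cancel]
    _ = (x - w) ⬝ᵥ A *ᵥ (x - w) + (x - w) ⬝ᵥ A *ᵥ w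
        + (w ⬝ᵥ A *ᵥ (x - w) + w ⬝ᵥ A *ᵥ w) := by
      rw [mulVec_add, add_dotProduct, dotProduct_add, dotProduct_add]
    _ = (A⁻¹ r r)⁻¹ + (x - w) ⬝ᵥ A *ᵥ (x - w) := by
      rw [hcross, hcross', dotProduct_mulVec_regressionVec hA]
      ring

lemma inv_le_dotProduct_mulVec (hA : A.PosDef) {x : ι → ℝ} (hx : x r = 1) :
    (A⁻¹ r r)⁻¹ ≤ x ⬝ᵥ A *ᵥ x := by
  rw [dotProduct_mulVec_eq_inv_add hA hx]
  simpa using hA.posSemidef.dotProduct_mulVec_nonneg (x - A.regressionVec r)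

/-- The summand of the paper's `V(r|T)` for the covariance `A`. -/
noncomputable def condVar (A : Matrix ι ι ℝ) (r : ι) (T : Finset ι) : ℝ :=
  ((A.submatrix (Subtype.val : {i // i ∈ insert r T} → ι) Subtype.val)⁻¹
    ⟨r, mem_insert_self r T⟩ ⟨r, mem_insert_self r T⟩)⁻¹

variable {T : Finset ι}

lemma condVar_le (hA : A.PosDef) {y : ι → ℝ} (hy : ∀ i ∉ insert r T, y i = 0)
    (hyr : y r = 1) : A.condVar r T ≤ y ⬝ᵥ A *ᵥ y := by
  rw [← restrict_dotProduct_submatrix_mulVec hy]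
  exact inv_le_dotProduct_mulVec (r := ⟨r, mem_insert_self r T⟩)
    (x := fun i : {i // i ∈ insert r T} => y i) (hA.submatrix Subtype.val_injective) hyr

/-- The minimiser in `condVar_le`: the regression vector of the block, extended by zero. -/
lemma exists_condVar (hA : A.PosDef) :
    ∃ y : ι → ℝ, (∀ i ∉ insert r T, y i = 0) ∧ y r = 1 ∧
      y ⬝ᵥ A *ᵥ y = A.condVar r T ∧ (A *ᵥ y) r = A.condVar r T := by
  set B := A.submatrix (Subtype.val : {i // i ∈ insert r T} → ι) Subtype.val
  have hB : B.PosDef := hA.submatrix Subtype.val_injective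
  set rT : {i // i ∈ insert r T} := ⟨r, mem_insert_self r T⟩
  obtain ⟨y, hy, hyB⟩ : ∃ y : ι → ℝ, (∀ i ∉ insert r T, y i = 0) ∧
      (fun i : {i // i ∈ insert r T} => y i) = B.regressionVec rT :=
    ⟨fun i => if h : i ∈ insert r T then B.regressionVec rT ⟨i, h⟩ else 0,
      fun i hi => dif_neg hi, funext fun i => dif_pos i.2⟩
  refine ⟨y, hy, ?_, ?_, ?_⟩
  · exact (congrFun hyB rT).trans (regressionVec_self hB)
  · rw [← restrict_dotProduct_submatrix_mulVec hy, hyB, dotProduct_mulVec_regressionVec hB]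
    rfl
  · rw [← submatrix_mulVec_restrict_apply hy A rT, hyB, mulVec_regressionVec hB]
    simp [condVar, B, rT]

lemma exists_condVar_eq_inv_add (hA : A.PosDef) :
    ∃ u : ι → ℝ, u r = 0 ∧ (∀ b ∉ insert r T, u b = -A.regressionVec r b) ∧
      A.condVar r T = (A⁻¹ r r)⁻¹ + u ⬝ᵥ A *ᵥ u ∧ (A *ᵥ u) r = u ⬝ᵥ A *ᵥ u := by
  obtain ⟨y, hy, hyr, hyq, hyA⟩ := exists_condVar (r := r) (T := T) hA
  have hdec := dotProduct_mulVec_eq_inv_add hA hyr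
  refine ⟨y - A.regressionVec r, by simp [hyr, regressionVec_self hA],
    fun b hb => by simp [hy b hb], by rw [← hyq, hdec], ?_⟩
  have hAu : (A *ᵥ (y - A.regressionVec r)) r = (A *ᵥ y) r - (A⁻¹ r r)⁻¹ := by
    simp [mulVec_sub, mulVec_regressionVec hA]
  rw [hAu, hyA, ← hyq, hdec, add_sub_cancel_left]

lemma condVar_eq_inv_of_regressionVec_eq_zero (hA : A.PosDef)
    (hw : ∀ b ∉ insert r T, A.regressionVec r b = 0) : A.condVar r T = (A⁻¹ r r)⁻¹ := by
  refine le_antisymm ?_ ?_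
  · simpa [dotProduct_mulVec_regressionVec hA] using condVar_le hA hw (regressionVec_self hA)
  · obtain ⟨u, -, -, hu, -⟩ := exists_condVar_eq_inv_add (r := r) (T := T) hA
    rw [hu]
    exact le_add_of_nonneg_right (hA.posSemidef.dotProduct_mulVec_nonneg u)

section LowerBound

variable {α : ℝ} {D : Finset ι}

lemma mul_dotProduct_self_le (hAα : (A - α • 1).PosSemidef) (u : ι → ℝ) :
    α * (u ⬝ᵥ u) ≤ u ⬝ᵥ A *ᵥ u := by
  have h := hAα.dotProduct_mulVec_nonneg u
  rw [star_trivial, dotProduct_sub_smul_one_mulVec] at h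
  linarith

lemma inv_add_sum_mul_sq_le_condVar (hA : A.PosDef) (hα : 0 ≤ α)
    (hAα : (A - α • 1).PosSemidef) (hD : Disjoint D (insert r T)) :
    (A⁻¹ r r)⁻¹ + ∑ b ∈ D, α * A.regressionVec r b ^ 2 ≤ A.condVar r T := by
  obtain ⟨u, -, huw, hv, -⟩ := exists_condVar_eq_inv_add (r := r) (T := T) hA
  have hsum : ∑ b ∈ D, A.regressionVec r b ^ 2 = ∑ b ∈ D, u b ^ 2 :=
    sum_congr rfl fun b hb => by rw [huw b (disjoint_left.mp hD hb), neg_sq]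
  rw [hv, ← mul_sum, hsum]
  gcongr
  calc α * ∑ b ∈ D, u b ^ 2 ≤ α * (u ⬝ᵥ u) := by gcongr; exact sum_sq_le_dotProduct_self D u
    _ ≤ u ⬝ᵥ A *ᵥ u := mul_dotProduct_self_le hAα u

/-- Equality would force `(A - α) u = 0` for the residual `u` of `exists_condVar_eq_inv_add`;
then `u ⬝ᵥ A *ᵥ u = (A *ᵥ u) r = α * u r = 0`, so `u = 0`. -/
lemma inv_add_sum_mul_sq_lt_condVar (hA : A.PosDef) (hα : 0 ≤ α)
    (hAα : (A - α • 1).PosSemidef) (hD : Disjoint D (insert r T))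
    (hw : ∃ b ∈ D, A.regressionVec r b ≠ 0) :
    (A⁻¹ r r)⁻¹ + ∑ b ∈ D, α * A.regressionVec r b ^ 2 < A.condVar r T := by
  obtain ⟨u, hur, huw, hv, hAu⟩ := exists_condVar_eq_inv_add (r := r) (T := T) hA
  obtain ⟨b, hbD, hwb⟩ := hw
  have hu : u ≠ 0 := fun h => hwb (by simpa [h] using huw b (disjoint_left.mp hD hbD))
  have hsum : ∑ b ∈ D, A.regressionVec r b ^ 2 = ∑ b ∈ D, u b ^ 2 :=
    sum_congr rfl fun b hb => by rw [huw b (disjoint_left.mp hD hb), neg_sq]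
  rw [hv, ← mul_sum, hsum, add_lt_add_iff_left]
  by_contra! hle
  have hDu : α * ∑ b ∈ D, u b ^ 2 ≤ α * (u ⬝ᵥ u) := by
    gcongr; exact sum_sq_le_dotProduct_self D u
  have hker : (A - α • 1) *ᵥ u = 0 := by
    refine (hAα.dotProduct_mulVec_zero_iff u).mp ?_
    rw [star_trivial, dotProduct_sub_smul_one_mulVec]
    linarith [mul_dotProduct_self_le hAα u]
  have hAur : (A *ᵥ u) r = 0 := by
    simpa [sub_mulVec, smul_mulVec, hur, sub_eq_zero] using congrFun hker r
  exact (hA.dotProduct_mulVec_pos hu).ne' (by simpa [hAu] using hAur)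

variable {N : ℕ} {C : Fin N → Matrix ι ι ℝ} {α : Fin N → ℝ}

lemma mean_inv_add_sum_mul_sq_le_mean_condVar (hC : ∀ n, (C n).PosDef) (hα : ∀ n, 0 ≤ α n)
    (hCα : ∀ n, (C n - α n • 1).PosSemidef) (hD : Disjoint D (insert r T)) :
    (1 / N) * ∑ n, (((C n)⁻¹ r r)⁻¹ + ∑ b ∈ D, α n * (C n).regressionVec r b ^ 2) ≤
      (1 / N) * ∑ n, (C n).condVar r T := by
  gcongr with n
  exact inv_add_sum_mul_sq_le_condVar (hC n) (hα n) (hCα n) hD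

lemma mean_inv_add_sum_mul_sq_lt_mean_condVar (hC : ∀ n, (C n).PosDef) (hα : ∀ n, 0 ≤ α n)
    (hCα : ∀ n, (C n - α n • 1).PosSemidef) (hD : Disjoint D (insert r T))
    (hw : ∃ n, ∃ b ∈ D, (C n).regressionVec r b ≠ 0) :
    (1 / N) * ∑ n, (((C n)⁻¹ r r)⁻¹ + ∑ b ∈ D, α n * (C n).regressionVec r b ^ 2) <
      (1 / N) * ∑ n, (C n).condVar r T := by
  obtain ⟨n₀, hn₀⟩ := hw
  have hN : (0 : ℝ) < 1 / N := by have := n₀.pos; positivity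
  refine mul_lt_mul_of_pos_left (sum_lt_sum (fun n _ => ?_) ⟨n₀, mem_univ _, ?_⟩) hN
  · exact inv_add_sum_mul_sq_le_condVar (hC n) (hα n) (hCα n) hD
  · exact inv_add_sum_mul_sq_lt_condVar (hC n₀) (hα n₀) (hCα n₀) hD hn₀

end LowerBound

end Matrix

lemma mean_add_mul_card_le_mean {ι : Type*} {N : ℕ} (a : Fin N → ℝ) (g : Fin N → ι → ℝ)
    (D : Finset ι) (ρ : ℝ) (hρ : ∀ b ∈ D, ρ ≤ (1 / N) * ∑ n, g n b) :
    (1 / N) * ∑ n, a n + ρ * #D ≤ (1 / N) * ∑ n, (a n + ∑ b ∈ D, g n b) := by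
  rw [sum_add_distrib, mul_add, sum_comm, mul_comm ρ, ← nsmul_eq_mul, mul_sum D]
  gcongr
  exact card_nsmul_le_sum D _ ρ hρ

lemma add_mul_card_lt_add_mul_card {ι : Type*} [DecidableEq ι] {s t : Finset ι} {a b ρ : ℝ}
    (hρ : 0 < ρ) (hts : t ≠ s) (hle : a + ρ * #(s \ t) ≤ b)
    (hlt : (s \ t).Nonempty → a + ρ * #(s \ t) < b) :
    a + ρ * #s < b + ρ * #t := by
  have hcard : (#s : ℝ) ≤ #(s \ t) + #t := by exact_mod_cast card_le_card_sdiff_add_card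
  rcases (s \ t).eq_empty_or_nonempty with hst | hst
  · have hss : s ⊂ t := ssubset_of_subset_of_ne (sdiff_eq_empty_iff_subset.mp hst) hts.symm
    have hlt' : (#s : ℝ) < #t := by exact_mod_cast card_lt_card hss
    rw [hst, card_empty, Nat.cast_zero, mul_zero, add_zero] at hle
    nlinarith
  · nlinarith [hlt hst]

theorem neighborhood_unique_minimizer_general {N d : ℕ}
    (C K : Fin N → Matrix (Fin d) (Fin d) ℝ)
    (hC : ∀ n, (C n).PosDef) (hK : ∀ n, K n = (C n)⁻¹)
    (α : Fin N → ℝ) (hα : ∀ n, 0 < α n)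
    (heig : ∀ n, (C n - α n • (1 : Matrix (Fin d) (Fin d) ℝ)).PosSemidef)
    (r : Fin d)
    (Nr : Finset (Fin d))
    (hNr : Nr = Finset.univ.filter (fun t => t ≠ r ∧ ∃ n, (K n) r t ≠ 0))
    (s : ℕ)
    (ρmin : ℝ) (hρmin : 0 < ρmin)
    (hpc : ∀ a b : Fin d, a ≠ b → (∃ n, (K n) a b ≠ 0) →
      ((1 : ℝ) / N) * ∑ n, α n * ((K n) a b / (K n) a a) ^ 2 ≥ ρmin)
    (V : Finset (Fin d) → ℝ)
    (hV : ∀ T : Finset (Fin d), r ∉ T →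
      V T = ((1 : ℝ) / N) * ∑ n,
        1 / ((Matrix.of fun i j : (insert r T : Finset (Fin d)) => C n i j)⁻¹
          ⟨r, Finset.mem_insert_self r T⟩ ⟨r, Finset.mem_insert_self r T⟩)) :
    ∀ T : Finset (Fin d), r ∉ T → T.card ≤ s → T ≠ Nr →
      V Nr + ρmin * Nr.card < V T + ρmin * T.card := by
  intro T hrT _ hTNr
  have hw : ∀ n b, (C n).regressionVec r b = K n r b / K n r r := by
    simp [regressionVec, hK]
  have hmemNr : ∀ {b}, b ∈ Nr ↔ b ≠ r ∧ ∃ n, K n r b ≠ 0 := by simp [hNr]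
  have hV' : ∀ T, r ∉ T → V T = (1 / N) * ∑ n, (C n).condVar r T := fun T hT => by
    simp only [hV T hT, condVar, one_div]
    rfl
  have hVNr : V Nr = (1 / N) * ∑ n, ((C n)⁻¹ r r)⁻¹ := by
    rw [hV' Nr (by simp [hmemNr])]
    refine congrArg _ (sum_congr rfl fun n _ => condVar_eq_inv_of_regressionVec_eq_zero (hC n)
      fun b hb => ?_)
    have hbNr : b ∉ Nr := fun h => hb (mem_insert_of_mem h)
    simp only [hmemNr, not_and, not_exists, not_not] at hbNr
    rw [hw, hbNr (fun h => hb (h ▸ mem_insert_self r Nr)) n, zero_div]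
  have hD : Disjoint (Nr \ T) (insert r T) := by
    simp +contextual [disjoint_left, hmemNr]
  have hmean : V Nr + ρmin * #(Nr \ T) ≤ (1 / N) * ∑ n,
      (((C n)⁻¹ r r)⁻¹ + ∑ b ∈ Nr \ T, α n * (C n).regressionVec r b ^ 2) := by
    rw [hVNr]
    refine mean_add_mul_card_le_mean _ _ _ _ fun b hb => ?_
    have hb' := hmemNr.mp (mem_sdiff.mp hb).1
    simpa only [hw] using hpc r b hb'.1.symm hb'.2
  rw [hV' T hrT]
  refine add_mul_card_lt_add_mul_card hρmin hTNr
    (hmean.trans (mean_inv_add_sum_mul_sq_le_mean_condVar hC (hα · |>.le) heig hD))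
    fun ⟨b, hb⟩ => hmean.trans_lt
      (mean_inv_add_sum_mul_sq_lt_mean_condVar hC (hα · |>.le) heig hD ?_)
  obtain ⟨n, hn⟩ := (hmemNr.mp (mem_sdiff.mp hb).1).2
  refine ⟨n, b, hb, ?_⟩
  rw [hw]
  exact div_ne_zero hn (hK n ▸ (hC n).inv.diag_pos.ne')

/-- Under the minimum partial correlation condition and the sparsity bound `|N(r)| ≤ s`,
the neighborhood `N(r)` is the unique minimizer, over sets `T ⊆ {1,…,d}\{r}` with
`|T| ≤ s`, of the penalized conditional variance `V(r|T) + ρ_min |T|`. -/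
theorem neighborhood_unique_minimizer {N d : ℕ} (hN : 0 < N)
    (C K : Fin N → Matrix (Fin d) (Fin d) ℝ)
    (hC : ∀ n, (C n).PosDef) (hK : ∀ n, K n = (C n)⁻¹)
    (α : Fin N → ℝ) (hα : ∀ n, 0 < α n)
    (heig : ∀ n, (C n - α n • (1 : Matrix (Fin d) (Fin d) ℝ)).PosSemidef)
    (r : Fin d)
    (Nr : Finset (Fin d))
    (hNr : Nr = Finset.univ.filter (fun t => t ≠ r ∧ ∃ n, (K n) r t ≠ 0))
    (s : ℕ) (hs : Nr.card ≤ s)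
    (ρmin : ℝ) (hρmin : 0 < ρmin)
    (hpc : ∀ a b : Fin d, a ≠ b → (∃ n, (K n) a b ≠ 0) →
      ((1 : ℝ) / N) * ∑ n, α n * ((K n) a b / (K n) a a) ^ 2 ≥ ρmin)
    (V : Finset (Fin d) → ℝ)
    (hV : ∀ T : Finset (Fin d), r ∉ T →
      V T = ((1 : ℝ) / N) * ∑ n,
        1 / ((Matrix.of fun i j : (insert r T : Finset (Fin d)) => C n i j)⁻¹
          ⟨r, Finset.mem_insert_self r T⟩ ⟨r, Finset.mem_insert_self r T⟩)) :
    ∀ T : Finset (Fin d), r ∉ T → T.card ≤ s → T ≠ Nr →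
      V Nr + ρmin * Nr.card < V T + ρmin * T.card :=
  neighborhood_unique_minimizer_general C K hC hK α hα heig r Nr hNr s ρmin hρmin hpc V hV
end

section
/- Let C be a symmetric positive definite m×m matrix with α ≤ λ_min(C), and K = C⁻¹. Fix indices r ≠ j. Let Q be an index set with r, j ∉ Q and such that K_{r,t} = 0 for all t ∉ Q ∪ {r, j}. Then the conditional variance of x_r given {x_t}_{t∈Q} (for x ~ N(0,C)) satisfies var(x_r | {x_t}_{t∈Q}) ≥ α (K_{r,j}/K_{r,r})² + 1/K_{r,r}. -/
/-!
The Schur complement `C r r - C r Q (C Q Q)⁻¹ C Q r` is the value of the quadratic form `zᵀ C z`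
at `z = e_r - (C Q Q)⁻¹ C Q r` (extended by zero off `Q`), a vector with `z r = 1` and `z j = 0`.
Split `z = w + d` with `w = K e_r / K r r`: since `C w = e_r / K r r` and `d r = 0`, the two parts
are `C`-orthogonal, so `zᵀ C z = 1 / K r r + dᵀ C d ≥ 1 / K r r + α (d j)²`, and
`d j = -K r j / K r r`.
-/

open Matrix

section CommRing

variable {R ι κ : Type*} [CommRing R] [Fintype ι]

theorem Matrix.IsSymm.dotProduct_mulVec_comm {C : Matrix ι ι R} (hC : C.IsSymm) (x y : ι → R) :
    x ⬝ᵥ C *ᵥ y = y ⬝ᵥ C *ᵥ x := by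
  rw [← dotProduct_transpose_mulVec, hC.eq]

variable [DecidableEq ι]

theorem Matrix.transpose_one_submatrix_mul_mul_one_submatrix (C : Matrix ι ι R) (f : κ → ι) :
    ((1 : Matrix ι ι R).submatrix id f)ᵀ * C * (1 : Matrix ι ι R).submatrix id f =
      C.submatrix f f := by
  ext k l
  simp [Matrix.mul_apply, one_apply]

variable [Fintype κ] [DecidableEq κ]

theorem Matrix.IsSymm.exists_dotProduct_mulVec_self_eq_schur_complement {C : Matrix ι ι R}
    (hC : C.IsSymm) (f : κ → ι) (hA : IsUnit (C.submatrix f f).det) (r : ι) (hr : r ∉ Set.range f) :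
    ∃ z : ι → R, z r = 1 ∧ (∀ t, t ≠ r → t ∉ Set.range f → z t = 0) ∧
      z ⬝ᵥ C *ᵥ z = C r r - ∑ k, ∑ l, C r (f k) * (C.submatrix f f)⁻¹ k l * C (f l) r := by
  set A := C.submatrix f f
  set P : Matrix ι κ R := (1 : Matrix ι ι R).submatrix id f
  set e : ι → R := Pi.single r 1
  set v : κ → R := fun k => C (f k) r
  set u := A⁻¹ *ᵥ v
  have hPu : ∀ t, t ∉ Set.range f → (P *ᵥ u) t = 0 := by
    intro t ht
    simp only [Set.mem_range, not_exists] at ht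
    simp [P, mulVec, dotProduct, Ne.symm (ht _)]
  have hv : Pᵀ *ᵥ (C *ᵥ e) = v := by
    rw [mulVec_single_one]
    ext k
    simp [P, v, mulVec, dotProduct, one_apply]
  have hAu : A *ᵥ u = v := by
    rw [mulVec_mulVec, mul_nonsing_inv A hA, one_mulVec]
  have hcross : P *ᵥ u ⬝ᵥ C *ᵥ e = u ⬝ᵥ v := by
    rw [dotProduct_comm, ← dotProduct_transpose_mulVec, hv]
  have hquad : P *ᵥ u ⬝ᵥ C *ᵥ (P *ᵥ u) = u ⬝ᵥ v := by
    rw [dotProduct_comm, ← dotProduct_transpose_mulVec, mulVec_mulVec, mulVec_mulVec,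
      transpose_one_submatrix_mul_mul_one_submatrix, hAu]
  have hschur : ∑ k, ∑ l, C r (f k) * A⁻¹ k l * C (f l) r = u ⬝ᵥ v := by
    rw [dotProduct_comm]
    simp [u, v, A, dotProduct, mulVec, Finset.mul_sum, mul_assoc, hC.apply r]
  refine ⟨e - P *ᵥ u, by simp [e, hPu r hr], fun t htr ht => by simp [e, hPu t ht, htr], ?_⟩
  rw [hschur, mulVec_sub, dotProduct_sub, sub_dotProduct, sub_dotProduct,
    hC.dotProduct_mulVec_comm e (P *ᵥ u), hcross, hquad, single_one_dotProduct, mulVec_single_one]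
  simp only [col_apply]
  ring

end CommRing

section Real

variable {ι : Type*} [Fintype ι] [DecidableEq ι]

theorem Matrix.PosSemidef.smul_dotProduct_self_le {C : Matrix ι ι ℝ} {α : ℝ}
    (h : (C - α • 1).PosSemidef) (x : ι → ℝ) : α * (x ⬝ᵥ x) ≤ x ⬝ᵥ C *ᵥ x := by
  have := h.dotProduct_mulVec_nonneg x
  rw [star_trivial, sub_mulVec, smul_mulVec, one_mulVec, dotProduct_sub, dotProduct_smul,
    smul_eq_mul] at this
  linarith

theorem Matrix.PosDef.dotProduct_mulVec_self_eq_inv_add {C : Matrix ι ι ℝ} (hC : C.PosDef)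
    {r : ι} {z : ι → ℝ} (hz : z r = 1) :
    z ⬝ᵥ C *ᵥ z = 1 / C⁻¹ r r +
      (z - (C⁻¹ r r)⁻¹ • C⁻¹ *ᵥ Pi.single r 1) ⬝ᵥ
        C *ᵥ (z - (C⁻¹ r r)⁻¹ • C⁻¹ *ᵥ Pi.single r 1) := by
  set w := (C⁻¹ r r)⁻¹ • C⁻¹ *ᵥ Pi.single r 1
  set d := z - w
  have hCw : C *ᵥ w = (C⁻¹ r r)⁻¹ • Pi.single r 1 := by
    rw [mulVec_smul, mulVec_mulVec, mul_nonsing_inv C hC.det_pos.ne'.isUnit, one_mulVec]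
  have hwr : w r = 1 := by
    simp [w, hC.inv.diag_pos.ne']
  have hortho : d ⬝ᵥ C *ᵥ w = 0 := by
    simp [hCw, d, hz, hwr]
  calc z ⬝ᵥ C *ᵥ z = (w + d) ⬝ᵥ C *ᵥ (w + d) := by rw [add_sub_cancel]
    _ = w ⬝ᵥ C *ᵥ w + 2 * (d ⬝ᵥ C *ᵥ w) + d ⬝ᵥ C *ᵥ d := by
      rw [mulVec_add, add_dotProduct, dotProduct_add, dotProduct_add,
        (isHermitian_iff_isSymm.mp hC.isHermitian).dotProduct_mulVec_comm w d]
      ring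
    _ = 1 / C⁻¹ r r + d ⬝ᵥ C *ᵥ d := by
      rw [hortho, hCw, dotProduct_smul, dotProduct_single_one, hwr]
      simp

theorem Matrix.PosDef.le_dotProduct_mulVec_self_of_apply_eq_one_of_apply_eq_zero
    {C : Matrix ι ι ℝ} (hC : C.PosDef) {α : ℝ} (hα : 0 ≤ α) (heig : (C - α • 1).PosSemidef)
    {r j : ι} {z : ι → ℝ} (hzr : z r = 1) (hzj : z j = 0) :
    α * (C⁻¹ r j / C⁻¹ r r) ^ 2 + 1 / C⁻¹ r r ≤ z ⬝ᵥ C *ᵥ z := by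
  set d := z - (C⁻¹ r r)⁻¹ • C⁻¹ *ᵥ Pi.single r 1
  have hdj : d j ^ 2 = (C⁻¹ r j / C⁻¹ r r) ^ 2 := by
    simp [d, hzj, (isHermitian_iff_isSymm.mp hC.inv.isHermitian).apply r j]
    ring
  have hdd : d j ^ 2 ≤ d ⬝ᵥ d := by
    simpa [sq, dotProduct] using
      Finset.single_le_sum (fun t _ => mul_self_nonneg (d t)) (Finset.mem_univ j)
  rw [hC.dotProduct_mulVec_self_eq_inv_add hzr, ← hdj]
  linarith [heig.smul_dotProduct_self_le d, mul_le_mul_of_nonneg_left hdd hα]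

end Real

theorem cond_variance_lower_bound_missing_one_general {m : ℕ}
    (C : Matrix (Fin m) (Fin m) ℝ) (hC : C.PosDef)
    (α : ℝ) (hα : 0 < α)
    (heig : (C - α • (1 : Matrix (Fin m) (Fin m) ℝ)).PosSemidef)
    (K : Matrix (Fin m) (Fin m) ℝ) (hK : K = C⁻¹)
    (r j : Fin m) (hrj : r ≠ j)
    (Q : Finset (Fin m)) (hrQ : r ∉ Q) (hjQ : j ∉ Q) :
    α * (K r j / K r r) ^ 2 + 1 / K r r
      ≤ C r r - ∑ i : Q, ∑ j' : Q,
          C r i * ((Matrix.of fun i j' : Q => C i j')⁻¹ i j') * C j' r := by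
  subst hK
  have hA : IsUnit (C.submatrix ((↑) : Q → Fin m) (↑)).det :=
    (hC.submatrix Subtype.val_injective).det_pos.ne'.isUnit
  obtain ⟨z, hzr, hz_zero, hz_schur⟩ :=
    (isHermitian_iff_isSymm.mp hC.isHermitian).exists_dotProduct_mulVec_self_eq_schur_complement
      _ hA r (by simpa using hrQ)
  have hzj : z j = 0 := hz_zero j hrj.symm (by simpa using hjQ)
  exact hz_schur ▸
    hC.le_dotProduct_mulVec_self_of_apply_eq_one_of_apply_eq_zero hα.le heig hzr hzj

/-- Key inequality: if the Markov neighborhood of `r` is contained in `Q ∪ {j}`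
(i.e. `K_{r,t} = 0` for all `t ∉ Q ∪ {r,j}`), and `λ_min(C) ≥ α > 0`, then the
conditional variance of `x_r` given `{x_t}_{t ∈ Q}` (the Schur complement) satisfies
`var(x_r | Q) ≥ α (K_{r,j}/K_{r,r})² + 1/K_{r,r}`. -/
theorem cond_variance_lower_bound_missing_one {m : ℕ}
    (C : Matrix (Fin m) (Fin m) ℝ) (hC : C.PosDef)
    (α : ℝ) (hα : 0 < α)
    (heig : (C - α • (1 : Matrix (Fin m) (Fin m) ℝ)).PosSemidef)
    (K : Matrix (Fin m) (Fin m) ℝ) (hK : K = C⁻¹)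
    (r j : Fin m) (hrj : r ≠ j)
    (Q : Finset (Fin m)) (hrQ : r ∉ Q) (hjQ : j ∉ Q)
    (hmarkov : ∀ t, t ∉ Q → t ≠ r → t ≠ j → K r t = 0) :
    α * (K r j / K r r) ^ 2 + 1 / K r r
      ≤ C r r - ∑ i : Q, ∑ j' : Q,
          C r i * ((Matrix.of fun i j' : Q => C i j')⁻¹ i j') * C j' r :=
  cond_variance_lower_bound_missing_one_general C hC α hα heig K hK r j hrj Q hrQ hjQ
end
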